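/- Fix positive conductances (C_k)_{k≥0} assigned by age. Then for every n ≥ 1, the map A ↦ CAP(A) on subsets of 𝕃₀⁽ⁿ⁾ (with CAP(∅) = 0) is a monotone clustering function: it is invariant under graph-isomorphisms of the generated subtrees, A ≺ B implies CAP(A) ≤ CAP(B) for all A,B with |A| = |B|, and CAP(A∪B) ≤ CAP(A) + CAP(B) for all disjoint A,B ⊆ 𝕃₀⁽ⁿ⁾. -/

import Mathlib

open Filter
open scoped Classical

noncomputable section

namespace PWC

/-- Leaves of the binary tree `𝕋⁽ⁿ⁾` of depth `n`: binary words of length `n`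
(coordinate `0` is the first step away from the root). -/
abbrev Leaf (n : ℕ) := Fin n → Bool

/-- The age (distance from the leaves) of the youngest common ancestor `u ∧ v` of two
leaves: `n` minus the length of their longest common prefix. -/
def meetAge {n : ℕ} (u v : Leaf n) : ℕ :=
  if u = v then 0 else n - sInf {i : ℕ | ∃ h : i < n, u ⟨i, h⟩ ≠ v ⟨i, h⟩}

/-- Canonical representative (as a leaf) of the ancestor of `u` at age `k`:
keep the first `n - k` coordinates and pad by `false`. -/
def trunc {n : ℕ} (k : ℕ) (u : Leaf n) : Leaf n :=
  fun i => if (i : ℕ) < n - k then u i else false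

/-- The branching points `ℬ(A) ∩ 𝕃_k` of `A` of age `k`, encoded by the canonical
representatives of the corresponding ancestors. -/
def branchPts {n : ℕ} (A : Finset (Leaf n)) (k : ℕ) : Finset (Leaf n) :=
  ((A ×ˢ A).filter (fun p => meetAge p.1 p.2 = k)).image (fun p => trunc k p.1)

/-- `b_k(A)`: the number of branching points of `A` of age `k`. -/
def bcount {n : ℕ} (A : Finset (Leaf n)) (k : ℕ) : ℕ := (branchPts A k).card

/-- `b_{k,ℓ}(A)`: the number of branching points of `A` of age `ℓ` whose direct
branching ancestor has age `k`; for `k = n+1` the indicator that the oldest branching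
point of `A` has age `ℓ` (i.e. the branching points at age `ℓ` having no strictly older
branching ancestor). -/
def b2count {n : ℕ} (A : Finset (Leaf n)) (k l : ℕ) : ℕ :=
  if k = n + 1 then
    ((branchPts A l).filter (fun w => ∀ j, l < j → j ≤ n → trunc j w ∉ branchPts A j)).card
  else
    ((branchPts A l).filter (fun w => trunc k w ∈ branchPts A k ∧
      ∀ j, l < j → j < k → trunc j w ∉ branchPts A j)).card

/-- `A ≺ B` : `A` is more clustered than `B`. -/
def MoreClustered {n : ℕ} (A B : Finset (Leaf n)) : Prop :=
  ∃ σ : Leaf n → Leaf n, Set.BijOn σ ↑A ↑B ∧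
    ∀ u ∈ A, ∀ v ∈ A, meetAge u v ≤ meetAge (σ u) (σ v)

/-- `A ∼ B` : the subtrees of `𝕋⁽ⁿ⁾` generated by `A` and `B` are graph-isomorphic,
i.e. there is a bijection of the leaf sets preserving all meet ages. -/
def EquivClustered {n : ℕ} (A B : Finset (Leaf n)) : Prop :=
  ∃ σ : Leaf n → Leaf n, Set.BijOn σ ↑A ↑B ∧
    ∀ u ∈ A, ∀ v ∈ A, meetAge (σ u) (σ v) = meetAge u v

/-- A clustering function: vanishes on `∅` and is invariant under isomorphism of the
generated subtrees. -/
def IsClusteringFn {n : ℕ} (Φ : Finset (Leaf n) → ℝ) : Prop :=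
  Φ ∅ = 0 ∧ ∀ A B : Finset (Leaf n), EquivClustered A B → Φ A = Φ B

/-- A monotone clustering function. -/
def IsMonotoneClusteringFn {n : ℕ} (Φ : Finset (Leaf n) → ℝ) : Prop :=
  IsClusteringFn Φ ∧
    (∀ A B : Finset (Leaf n), MoreClustered A B → Φ A ≤ Φ B) ∧
    (∀ A B : Finset (Leaf n), Disjoint A B → Φ (A ∪ B) ≤ Φ A + Φ B)

/-- The partition function `Z_n^{Φ,J}`. -/
def Z (n : ℕ) (Φ : Finset (Leaf n) → ℝ) (J : ℝ) : ℝ :=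
  ∑ A : Finset (Leaf n), Real.exp (J * (A.card : ℝ) - Φ A)

/-- The finite-volume free energy `ζ_n^Φ(J) = 2⁻ⁿ ln Z_n^{Φ,J}`. -/
def zetaN (n : ℕ) (Φ : Finset (Leaf n) → ℝ) (J : ℝ) : ℝ :=
  Real.log (Z n Φ J) / 2 ^ n

/-- The canonical partition function `W_n^Φ(a₀)`. -/
def W (n : ℕ) (Φ : Finset (Leaf n) → ℝ) (a₀ : ℕ) : ℝ :=
  ∑ A ∈ Finset.univ.filter (fun A : Finset (Leaf n) => A.card = a₀), Real.exp (-Φ A)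

/-- The finite-volume canonical free energy `ω_n^Φ(ε) = 2⁻ⁿ ln W_n^Φ(ε 2ⁿ)` (for a
dyadic `ε ∈ [0,1]` and `n` large, `⌊ε 2ⁿ⌋ = ε 2ⁿ`). -/
def omegaN (n : ℕ) (Φ : Finset (Leaf n) → ℝ) (ε : ℝ) : ℝ :=
  Real.log (W n Φ ⌊ε * 2 ^ n⌋₊) / 2 ^ n

/-- The expected density `ρ_n^Φ(J)` of the dry set under the PWC measure. -/
def rhoN (n : ℕ) (Φ : Finset (Leaf n) → ℝ) (J : ℝ) : ℝ :=
  (∑ A : Finset (Leaf n), (A.card : ℝ) * Real.exp (J * (A.card : ℝ) - Φ A)) /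
    (2 ^ n * Z n Φ J)

/-- A dyadic rational. -/
def IsDyadic (x : ℝ) : Prop := ∃ (k : ℤ) (m : ℕ), x = (k : ℝ) / 2 ^ m

/-- The hypotheses of the general theory (Proposition 1.2): each `Φ_n` (for `n ≥ 1`) is
a monotone, non-negative clustering function, and `Φ_n(A) ≤ Φ_{n-1}(A) + γ_n` for any
`A` contained in the leaf set of one of the two subtrees of `𝕋⁽ⁿ⁾` rooted at a child of
the root (identified with `𝕋⁽ⁿ⁻¹⁾` by prepending the corresponding letter), where
`γ_n ≥ 0` and `∑ γ_n 2⁻ⁿ < ∞`. -/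
structure GoodSeq (Φ : ∀ n, Finset (Fin n → Bool) → ℝ) (γ : ℕ → ℝ) : Prop where
  mono : ∀ n, 1 ≤ n → IsMonotoneClusteringFn (Φ n)
  nonneg : ∀ n, 1 ≤ n → ∀ A, 0 ≤ Φ n A
  gamma_nonneg : ∀ n, 0 ≤ γ n
  gamma_summable : Summable fun n => γ n / 2 ^ n
  subtree : ∀ (n : ℕ) (b : Bool) (A : Finset (Fin n → Bool)),
    Φ (n + 1) (A.image fun u => Fin.cons b u) ≤ Φ n A + γ (n + 1)

/-- The first order branching clustering function with parameters `(h_k)_{k=0}^n`, `h`. -/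
def foPhi (n : ℕ) (hs : ℕ → ℝ) (h : ℝ) (A : Finset (Leaf n)) : ℝ :=
  if A = ∅ then 0 else (∑ k ∈ Finset.range (n + 1), hs k * (bcount A k : ℝ)) + h

/-- The second order branching clustering function with parameters
`(h_{k,ℓ})_{0 ≤ ℓ < k ≤ n+1}`, `h`. -/
def soPhi (n : ℕ) (H : ℕ → ℕ → ℝ) (h : ℝ) (A : Finset (Leaf n)) : ℝ :=
  if A = ∅ then 0
  else (∑ k ∈ Finset.range (n + 2), ∑ l ∈ Finset.range k, H k l * (b2count A k l : ℝ)) + h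

/-- A non-decreasing (infinite) triangular array. -/
def ArrayMono (H : ℕ → ℕ → ℝ) : Prop :=
  ∀ k k' l l' : ℕ, l < k → l' < k' → k ≤ k' → l ≤ l' → H k l ≤ H k' l'

/-- The Dirichlet energy on `𝕋⁽ⁿ⁾` of `f` (vertices encoded as words of length `≤ n`,
read from the root; a vertex of length `m` has age `n - m` and its parent edge has
conductance `C (n - m)`). -/
def energy (n : ℕ) (C : ℕ → ℝ) (f : List Bool → ℝ) : ℝ :=
  ∑ m ∈ Finset.Icc 1 n, ∑ v : Fin m → Bool,
    C (n - m) * (f (List.ofFn v) - f (List.ofFn v).dropLast) ^ 2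

/-- The capacity of a set of leaves `A ⊆ 𝕃₀⁽ⁿ⁾`. -/
def cap (n : ℕ) (C : ℕ → ℝ) (A : Finset (Leaf n)) : ℝ :=
  sInf {x : ℝ | ∃ f : List Bool → ℝ, f [] = 1 ∧ (∀ u ∈ A, f (List.ofFn u) = 0) ∧
    x = energy n C f}

/-!
The capacity of `A` is the effective conductance between the root and `A`. Minimizing the Dirichlet
energy one vertex at a time, it is the parallel sum over the two children of the root of the
conductances of their subtrees, each of which is the series composition `c x / (c + x)` of the
edge to the root (conductance `c`) with the subtree below (conductance `x`). As `x ↦ c x / (c + x)`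
is monotone and subadditive on `[0, ∞)`, subadditivity of the capacity follows by induction on the
depth. For monotonicity, let `σ` not decrease meet ages: two leaves in different halves of the tree
meet at the maximal age, so they are sent to different halves. Hence the leaves that `σ` sends into
a given half all lie in one half themselves, and subadditivity reduces the comparison to subtrees.
-/

def seriesCond (c x : ℝ) : ℝ := c * x / (c + x)

section seriesCond

variable {c x y : ℝ}

lemma seriesCond_nonneg (hc : 0 < c) (hx : 0 ≤ x) : 0 ≤ seriesCond c x := by
  unfold seriesCond; positivity

lemma seriesCond_mono (hc : 0 < c) (hx : 0 ≤ x) (hxy : x ≤ y) :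
    seriesCond c x ≤ seriesCond c y := by
  unfold seriesCond
  rw [div_le_div_iff₀ (by linarith) (by linarith)]
  nlinarith [mul_le_mul_of_nonneg_left hxy (mul_pos hc hc).le]

lemma seriesCond_add_le (hc : 0 < c) (hx : 0 ≤ x) (hy : 0 ≤ y) :
    seriesCond c (x + y) ≤ seriesCond c x + seriesCond c y := by
  unfold seriesCond
  rw [div_add_div _ _ (by positivity) (by positivity), div_le_div_iff₀ (by positivity) (by positivity)]
  nlinarith [mul_nonneg (mul_nonneg hx hy) hc.le, mul_nonneg (mul_nonneg hx hy) (add_nonneg hx hy),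
    mul_nonneg (mul_nonneg hx hy) (mul_pos hc hc).le]

/-- Energy of the potentials `t`, `s`, `0` across an edge of conductance `c` followed by a network
of conductance `x`: it is minimal at `s = t c / (c + x)` (`sq_mul_seriesCond_eq`). -/
lemma sq_mul_seriesCond_le (hc : 0 < c) (hx : 0 ≤ x) (s t : ℝ) :
    t ^ 2 * seriesCond c x ≤ c * (s - t) ^ 2 + s ^ 2 * x := by
  rw [seriesCond, ← mul_div_assoc, div_le_iff₀ (by linarith)]
  nlinarith [sq_nonneg ((c + x) * s - c * t)]

lemma sq_mul_seriesCond_eq (hc : 0 < c) (hx : 0 ≤ x) (t : ℝ) :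
    c * (t * c / (c + x) - t) ^ 2 + (t * c / (c + x)) ^ 2 * x = t ^ 2 * seriesCond c x := by
  have : c + x ≠ 0 := by positivity
  rw [seriesCond]
  field_simp
  ring

end seriesCond

def branch {n : ℕ} (b : Bool) (A : Finset (Leaf (n + 1))) : Finset (Leaf n) :=
  Finset.univ.filter fun w => Fin.cons b w ∈ A

section branch

variable {n : ℕ} {b : Bool} {A B : Finset (Leaf (n + 1))}

@[simp]
lemma mem_branch {w : Leaf n} : w ∈ branch b A ↔ Fin.cons b w ∈ A := by
  simp [branch]

@[simp]
lemma branch_empty : branch b (∅ : Finset (Leaf (n + 1))) = ∅ := by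
  ext; simp

@[simp]
lemma branch_union : branch b (A ∪ B) = branch b A ∪ branch b B := by
  ext; simp

lemma branch_eq_empty_of_forall_head_ne (h : ∀ u ∈ A, u 0 ≠ b) : branch b A = ∅ := by
  ext w; simpa using fun hw => h _ hw (by simp)

end branch

/-- `effCond C n T` is the effective conductance between the parent of a vertex `v` of age `n`
and the set `T` of leaves below `v`, the edge from `v` to its parent included; `rootCond C n A`
is the effective conductance between the root of `𝕋⁽ⁿ⁺¹⁾` and `A`. -/
def effCond (C : ℕ → ℝ) : (n : ℕ) → Finset (Leaf n) → ℝ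
  | 0, T => if T = ∅ then 0 else C 0
  | n + 1, T => seriesCond (C (n + 1)) (∑ b, effCond C n (branch b T))

def rootCond (C : ℕ → ℝ) (n : ℕ) (A : Finset (Leaf (n + 1))) : ℝ :=
  ∑ b, effCond C n (branch b A)

section effCond

variable {C : ℕ → ℝ}

lemma effCond_succ (n : ℕ) (T : Finset (Leaf (n + 1))) :
    effCond C (n + 1) T = seriesCond (C (n + 1)) (rootCond C n T) := rfl

@[simp]
lemma effCond_empty : ∀ n, effCond C n ∅ = 0
  | 0 => by simp [effCond]
  | n + 1 => by simp [effCond, effCond_empty n, seriesCond]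

@[simp]
lemma rootCond_empty (n : ℕ) : rootCond C n ∅ = 0 := by
  simp [rootCond]

lemma effCond_nonneg (hC : ∀ k, 0 < C k) : ∀ n (T : Finset (Leaf n)), 0 ≤ effCond C n T
  | 0, T => by unfold effCond; split_ifs <;> simp [(hC 0).le]
  | n + 1, _ => seriesCond_nonneg (hC _) (Finset.sum_nonneg fun _ _ => effCond_nonneg hC n _)

lemma rootCond_nonneg (hC : ∀ k, 0 < C k) (n : ℕ) (A : Finset (Leaf (n + 1))) :
    0 ≤ rootCond C n A :=
  Finset.sum_nonneg fun _ _ => effCond_nonneg hC n _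

lemma effCond_union_le (hC : ∀ k, 0 < C k) :
    ∀ n (T U : Finset (Leaf n)), effCond C n (T ∪ U) ≤ effCond C n T + effCond C n U
  | 0, T, U => by
    unfold effCond; split_ifs <;> simp_all [(hC 0).le]
  | n + 1, T, U => by
    simp only [effCond_succ]
    calc seriesCond (C (n + 1)) (rootCond C n (T ∪ U))
        ≤ seriesCond (C (n + 1)) (rootCond C n T + rootCond C n U) := by
          refine seriesCond_mono (hC _) (rootCond_nonneg hC n _) ?_
          simpa only [rootCond, branch_union, ← Finset.sum_add_distrib] using
            Finset.sum_le_sum fun b _ => effCond_union_le hC n (branch b T) (branch b U)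
      _ ≤ _ := seriesCond_add_le (hC _) (rootCond_nonneg hC n _) (rootCond_nonneg hC n _)

lemma rootCond_union_le (hC : ∀ k, 0 < C k) (n : ℕ) (A B : Finset (Leaf (n + 1))) :
    rootCond C n (A ∪ B) ≤ rootCond C n A + rootCond C n B := by
  simpa only [rootCond, branch_union, ← Finset.sum_add_distrib] using
    Finset.sum_le_sum fun b _ => effCond_union_le hC n (branch b A) (branch b B)

lemma rootCond_eq_of_forall_head_eq {n : ℕ} {A : Finset (Leaf (n + 1))} {b : Bool}
    (hA : ∀ u ∈ A, u 0 = b) : rootCond C n A = effCond C n (branch b A) :=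
  Fintype.sum_eq_single b fun b' hb' => by
    rw [branch_eq_empty_of_forall_head_ne fun u hu => (hA u hu).trans_ne hb'.symm, effCond_empty]

end effCond

section meetAge

variable {n : ℕ}

lemma meetAge_le (u v : Leaf n) : meetAge u v ≤ n := by
  unfold meetAge; split_ifs <;> omega

lemma meetAge_of_head_ne {u v : Leaf (n + 1)} (h : u 0 ≠ v 0) : meetAge u v = n + 1 := by
  have h0 : 0 ∈ {i : ℕ | ∃ h : i < n + 1, u ⟨i, h⟩ ≠ v ⟨i, h⟩} := ⟨n.succ_pos, h⟩
  rw [meetAge, if_neg (ne_of_apply_ne (· 0) h), Nat.sInf_eq_zero.2 (Or.inl h0)]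
  rfl

lemma meetAge_cons (b : Bool) (w w' : Leaf n) :
    meetAge (Fin.cons b w : Leaf (n + 1)) (Fin.cons b w') = meetAge w w' := by
  by_cases h : w = w'
  · simp [meetAge, h]
  have hne : (Fin.cons b w : Leaf (n + 1)) ≠ Fin.cons b w' := fun h' => h (Fin.cons_injective2 h').2
  set S := {j : ℕ | ∃ h : j < n, w ⟨j, h⟩ ≠ w' ⟨j, h⟩}
  set S' := {j : ℕ | ∃ h : j < n + 1,
    (Fin.cons b w : Leaf (n + 1)) ⟨j, h⟩ ≠ (Fin.cons b w' : Leaf (n + 1)) ⟨j, h⟩}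
  have hsucc : ∀ {j}, j + 1 ∈ S' ↔ j ∈ S :=
    ⟨fun ⟨_, hj⟩ => ⟨by omega, hj⟩, fun ⟨_, hj⟩ => ⟨by omega, hj⟩⟩
  obtain ⟨i, hi⟩ := Function.ne_iff.1 h
  have hS : S.Nonempty := ⟨i, i.2, hi⟩
  have hS' : S'.Nonempty := ⟨i + 1, hsucc.2 ⟨i.2, hi⟩⟩
  have hinf : sInf S' = sInf S + 1 := by
    obtain ⟨k, hk⟩ : ∃ k, sInf S' = k + 1 :=
      Nat.exists_eq_succ_of_ne_zero fun h0 => (h0 ▸ Nat.sInf_mem hS').2 rfl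
    have := Nat.sInf_le (hsucc.1 (hk ▸ Nat.sInf_mem hS'))
    have := Nat.sInf_le (hsucc.2 (Nat.sInf_mem hS))
    omega
  have hlt : sInf S < n := (Nat.sInf_mem hS).1
  rw [meetAge, meetAge, if_neg hne, if_neg h]
  change n + 1 - sInf S' = n - sInf S
  omega

lemma meetAge_le_of_head_eq {u v : Leaf (n + 1)} (h : u 0 = v 0) : meetAge u v ≤ n := by
  rw [← Fin.cons_self_tail u, ← Fin.cons_self_tail v, h, meetAge_cons]
  exact meetAge_le _ _

end meetAge

structure SpreadsInto {n : ℕ} (σ : Leaf n → Leaf n) (T U : Finset (Leaf n)) : Prop where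
  mapsTo : ∀ u ∈ T, σ u ∈ U
  meetAge_le : ∀ u ∈ T, ∀ v ∈ T, meetAge u v ≤ meetAge (σ u) (σ v)

section SpreadsInto

variable {n : ℕ} {A B : Finset (Leaf n)}

lemma MoreClustered.exists_spreadsInto (h : MoreClustered A B) : ∃ σ, SpreadsInto σ A B :=
  let ⟨σ, hσ, hage⟩ := h
  ⟨σ, fun _ hu => hσ.mapsTo hu, hage⟩

lemma EquivClustered.exists_spreadsInto (h : EquivClustered A B) : ∃ σ, SpreadsInto σ A B :=
  let ⟨σ, hσ, hage⟩ := h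
  ⟨σ, fun _ hu => hσ.mapsTo hu, fun u hu v hv => (hage u hu v hv).ge⟩

lemma EquivClustered.exists_spreadsInto_symm (h : EquivClustered A B) : ∃ τ, SpreadsInto τ B A := by
  obtain ⟨σ, hσ, hage⟩ := h
  have hinv := hσ.invOn_invFunOn
  have hτ := hσ.symm hinv.symm
  refine ⟨Function.invFunOn σ A, fun x hx => hτ.mapsTo hx, fun x hx y hy => ?_⟩
  have := hage _ (hτ.mapsTo hx) _ (hτ.mapsTo hy)
  rw [hinv.2 hx, hinv.2 hy] at this
  exact this.le

variable {σ : Leaf (n + 1) → Leaf (n + 1)} {T U : Finset (Leaf (n + 1))}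

lemma SpreadsInto.head_eq (h : SpreadsInto σ T U) {u v : Leaf (n + 1)} (hu : u ∈ T) (hv : v ∈ T)
    (hσ : σ u 0 = σ v 0) : u 0 = v 0 := by
  by_contra hne
  have := h.meetAge_le u hu v hv
  rw [meetAge_of_head_ne hne] at this
  exact absurd (meetAge_le_of_head_eq hσ) (by omega)

lemma SpreadsInto.branch_filter (h : SpreadsInto σ T U) (b γ : Bool) :
    SpreadsInto (fun w => Fin.tail (σ (Fin.cons b w)))
      (branch b (T.filter fun u => σ u 0 = γ)) (branch γ U) := by
  have hcons : ∀ w ∈ branch b (T.filter fun u => σ u 0 = γ),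
      Fin.cons b w ∈ T ∧ σ (Fin.cons b w) = Fin.cons γ (Fin.tail (σ (Fin.cons b w))) := by
    intro w hw
    obtain ⟨hT, hγ⟩ := Finset.mem_filter.1 (mem_branch.1 hw)
    exact ⟨hT, by rw [← hγ, Fin.cons_self_tail]⟩
  refine ⟨fun w hw => ?_, fun w hw w' hw' => ?_⟩
  · rw [mem_branch, ← (hcons w hw).2]
    exact h.mapsTo _ (hcons w hw).1
  · have := h.meetAge_le _ (hcons w hw).1 _ (hcons w' hw').1
    rwa [meetAge_cons, (hcons w hw).2, (hcons w' hw').2, meetAge_cons] at this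

end SpreadsInto

section monotone

variable {C : ℕ → ℝ}

lemma rootCond_le_of_spreadsInto_of {n : ℕ} (hC : ∀ k, 0 < C k)
    (ih : ∀ (T U : Finset (Leaf n)) (τ : Leaf n → Leaf n), SpreadsInto τ T U →
      effCond C n T ≤ effCond C n U)
    {σ : Leaf (n + 1) → Leaf (n + 1)} {T U : Finset (Leaf (n + 1))} (h : SpreadsInto σ T U) :
    rootCond C n T ≤ rootCond C n U := by
  set S : Bool → Finset (Leaf (n + 1)) := fun γ => T.filter fun u => σ u 0 = γ
  have hT : T = S false ∪ S true := by
    ext u; cases hu : σ u 0 <;> simp [S, hu]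
  have hS : ∀ γ, rootCond C n (S γ) ≤ effCond C n (branch γ U) := by
    intro γ
    obtain hempty | ⟨u, hu⟩ := (S γ).eq_empty_or_nonempty
    · rw [hempty, rootCond_empty]
      exact effCond_nonneg hC n _
    obtain ⟨huT, huγ⟩ := Finset.mem_filter.1 hu
    rw [rootCond_eq_of_forall_head_eq fun v hv => h.head_eq (Finset.mem_filter.1 hv).1 huT
      ((Finset.mem_filter.1 hv).2.trans huγ.symm)]
    exact ih _ _ _ (h.branch_filter (u 0) γ)
  calc rootCond C n T ≤ rootCond C n (S false) + rootCond C n (S true) :=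
        hT ▸ rootCond_union_le hC n _ _
    _ ≤ effCond C n (branch false U) + effCond C n (branch true U) := add_le_add (hS false) (hS true)
    _ = rootCond C n U := by simp [rootCond, add_comm]

lemma effCond_le_of_spreadsInto (hC : ∀ k, 0 < C k) :
    ∀ {n} {T U : Finset (Leaf n)} {σ : Leaf n → Leaf n}, SpreadsInto σ T U →
      effCond C n T ≤ effCond C n U
  | 0, T, U, σ, h => by
    obtain rfl | ⟨u, hu⟩ := T.eq_empty_or_nonempty
    · simpa using effCond_nonneg hC 0 U
    · simp [effCond, Finset.ne_empty_of_mem hu, Finset.ne_empty_of_mem (h.mapsTo u hu)]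
  | n + 1, _, _, _, h => seriesCond_mono (hC _) (rootCond_nonneg hC n _)
      (rootCond_le_of_spreadsInto_of hC (fun _ _ _ => effCond_le_of_spreadsInto hC) h)

lemma rootCond_le_of_spreadsInto (hC : ∀ k, 0 < C k) {n : ℕ} {T U : Finset (Leaf (n + 1))}
    {σ : Leaf (n + 1) → Leaf (n + 1)} (h : SpreadsInto σ T U) : rootCond C n T ≤ rootCond C n U :=
  rootCond_le_of_spreadsInto_of hC (fun _ _ _ => effCond_le_of_spreadsInto hC) h

end monotone

lemma energy_eq_sum_range (n : ℕ) (C : ℕ → ℝ) (f : List Bool → ℝ) :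
    energy n C f = ∑ i ∈ Finset.range n, ∑ v : Fin (i + 1) → Bool,
      C (n - (i + 1)) * (f (List.ofFn v) - f (List.ofFn v).dropLast) ^ 2 := by
  rw [energy, ← Finset.Ico_add_one_right_eq_Icc, Finset.range_eq_Ico]
  exact (Finset.sum_Ico_add' (fun m => ∑ v : Fin m → Bool,
    C (n - m) * (f (List.ofFn v) - f (List.ofFn v).dropLast) ^ 2) 0 n 1).symm

lemma energy_succ (n : ℕ) (C : ℕ → ℝ) (f : List Bool → ℝ) :
    energy (n + 1) C f =
      ∑ b, (C n * (f [b] - f []) ^ 2 + energy n C fun l => f (b :: l)) := by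
  rw [energy_eq_sum_range, Finset.sum_range_succ', Finset.sum_add_distrib, add_comm (∑ b : Bool, _)]
  congr 1
  simp only [energy_eq_sum_range]
  rw [Finset.sum_comm]
  refine Finset.sum_congr rfl fun i _ => ?_
  rw [← Fintype.sum_prod_type', ← Fintype.sum_equiv (Fin.consEquiv fun _ => Bool) _ _ fun _ => rfl]
  exact Fintype.sum_congr _ _ fun _ => by simp

section capacity

variable {C : ℕ → ℝ}

lemma sq_mul_rootCond_le_energy_of {n : ℕ}
    (ih : ∀ (T : Finset (Leaf n)) (g : List Bool → ℝ) (s : ℝ), (∀ u ∈ T, g (List.ofFn u) = 0) →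
      s ^ 2 * effCond C n T ≤ C n * (g [] - s) ^ 2 + energy n C g)
    {A : Finset (Leaf (n + 1))} {f : List Bool → ℝ} (hf : ∀ u ∈ A, f (List.ofFn u) = 0) :
    f [] ^ 2 * rootCond C n A ≤ energy (n + 1) C f := by
  rw [energy_succ, rootCond, Finset.mul_sum]
  refine Finset.sum_le_sum fun b _ => ih (branch b A) (fun l => f (b :: l)) _ fun w hw => ?_
  simpa using hf _ (mem_branch.1 hw)

lemma sq_mul_effCond_le_energy (hC : ∀ k, 0 < C k) :
    ∀ n (T : Finset (Leaf n)) (f : List Bool → ℝ) (s : ℝ), (∀ u ∈ T, f (List.ofFn u) = 0) →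
      s ^ 2 * effCond C n T ≤ C n * (f [] - s) ^ 2 + energy n C f
  | 0, T, f, s, hf => by
    obtain rfl | ⟨u, hu⟩ := T.eq_empty_or_nonempty
    · simpa [effCond, energy] using mul_nonneg (hC 0).le (sq_nonneg (f [] - s))
    · have : f [] = 0 := by simpa using hf u hu
      simp [effCond, energy, Finset.ne_empty_of_mem hu, this, mul_comm]
  | n + 1, T, f, s, hf =>
    calc s ^ 2 * effCond C (n + 1) T
        ≤ C (n + 1) * (f [] - s) ^ 2 + f [] ^ 2 * rootCond C n T :=
          sq_mul_seriesCond_le (hC _) (rootCond_nonneg hC n T) _ _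
      _ ≤ C (n + 1) * (f [] - s) ^ 2 + energy (n + 1) C f := by
          gcongr
          exact sq_mul_rootCond_le_energy_of (sq_mul_effCond_le_energy hC n) hf

def graft (t : ℝ) (g : Bool → List Bool → ℝ) : List Bool → ℝ
  | [] => t
  | b :: l => g b l

lemma exists_energy_eq_rootCond_of {n : ℕ}
    (ih : ∀ (T : Finset (Leaf n)) (s : ℝ), ∃ g : List Bool → ℝ,
      (∀ u ∈ T, g (List.ofFn u) = 0) ∧ C n * (g [] - s) ^ 2 + energy n C g = s ^ 2 * effCond C n T)
    (A : Finset (Leaf (n + 1))) (t : ℝ) :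
    ∃ f : List Bool → ℝ, f [] = t ∧ (∀ u ∈ A, f (List.ofFn u) = 0) ∧
      energy (n + 1) C f = t ^ 2 * rootCond C n A := by
  choose g hg he using fun b => ih (branch b A) t
  refine ⟨graft t g, rfl, fun u hu => ?_, ?_⟩
  · rw [← Fin.cons_self_tail u, List.ofFn_cons]
    exact hg _ _ (by simpa using hu)
  · rw [energy_succ, rootCond, Finset.mul_sum]
    exact Finset.sum_congr rfl fun b _ => he b

lemma exists_energy_eq_effCond (hC : ∀ k, 0 < C k) :
    ∀ n (T : Finset (Leaf n)) (s : ℝ), ∃ f : List Bool → ℝ,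
      (∀ u ∈ T, f (List.ofFn u) = 0) ∧ C n * (f [] - s) ^ 2 + energy n C f = s ^ 2 * effCond C n T
  | 0, T, s => by
    refine ⟨fun _ => if T = ∅ then s else 0, fun u hu => by simp [Finset.ne_empty_of_mem hu], ?_⟩
    by_cases hT : T = ∅ <;> simp [hT, effCond, energy, mul_comm]
  | n + 1, T, s => by
    obtain ⟨f, hf, hvan, he⟩ := exists_energy_eq_rootCond_of (exists_energy_eq_effCond hC n) T
      (s * C (n + 1) / (C (n + 1) + rootCond C n T))
    exact ⟨f, hvan, by rw [he, hf, sq_mul_seriesCond_eq (hC _) (rootCond_nonneg hC n T), effCond_succ]⟩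

lemma cap_succ (hC : ∀ k, 0 < C k) (n : ℕ) : cap (n + 1) C = rootCond C n := by
  funext A
  obtain ⟨f, hf, hvan, he⟩ := exists_energy_eq_rootCond_of (exists_energy_eq_effCond hC n) A 1
  refine IsLeast.csInf_eq ⟨⟨f, hf, hvan, by rw [he, one_pow, one_mul]⟩, ?_⟩
  rintro _ ⟨g, hg, hgvan, rfl⟩
  simpa [hg] using sq_mul_rootCond_le_energy_of (sq_mul_effCond_le_energy hC n) hgvan

end capacity

/-- Proposition 1.22: for positive conductances assigned by age, the
capacity `A ↦ CAP(A)` is a monotone clustering function on the leaves of `𝕋⁽ⁿ⁾`. -/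
theorem stmt18 (C : ℕ → ℝ) (hC : ∀ k, 0 < C k) (n : ℕ) (hn : 1 ≤ n) :
    IsMonotoneClusteringFn (cap n C) := by
  obtain ⟨m, rfl⟩ : ∃ m, n = m + 1 := ⟨n - 1, by omega⟩
  rw [cap_succ hC]
  refine ⟨⟨rootCond_empty m, fun A B h => ?_⟩, fun A B h => ?_,
    fun A B _ => rootCond_union_le hC m A B⟩
  · obtain ⟨σ, hσ⟩ := h.exists_spreadsInto
    obtain ⟨τ, hτ⟩ := h.exists_spreadsInto_symm
    exact (rootCond_le_of_spreadsInto hC hσ).antisymm (rootCond_le_of_spreadsInto hC hτ)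
  · obtain ⟨σ, hσ⟩ := h.exists_spreadsInto
    exact rootCond_le_of_spreadsInto hC hσ

end PWC
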